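/- Let X be a 2-based Banach space with polar parameterization p. Then at every point t ∈ ℝ the one-sided derivatives p'_−(t) = lim_{ε→0−}(p(t+ε) − p(t))/ε and p'_+(t) = lim_{ε→0+}(p(t+ε) − p(t))/ε exist, and the set {t ∈ ℝ : p'_−(t) ≠ p'_+(t)} is at most countable. -/

import Mathlib

noncomputable section
open MeasureTheory Set Filter
open scoped ENNReal Topology

variable {X : Type*} [NormedAddCommGroup X] [NormedSpace ℝ X]

/-- `e^{it} = cos t • e₁ + sin t • e₂` for the basis `b 0, b 1`. -/
def expV (b : Module.Basis (Fin 2) ℝ X) (t : ℝ) : X :=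
  Real.cos t • b 0 + Real.sin t • b 1

/-- The polar parameterization `p(t) = e^{it}/‖e^{it}‖` of the unit sphere. -/
def polarParam (b : Module.Basis (Fin 2) ℝ X) (t : ℝ) : X :=
  ‖expV b t‖⁻¹ • expV b t

/-- The Euclidean norm `|x| = √(e₁*(x)² + e₂*(x)²)` associated to the basis. -/
def euclNorm (b : Module.Basis (Fin 2) ℝ X) (x : X) : ℝ :=
  Real.sqrt ((b.coord 0 x)^2 + (b.coord 1 x)^2)

/-- `c = min{‖x‖ : |x| = 1}`. -/
def cConst (b : Module.Basis (Fin 2) ℝ X) : ℝ :=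
  sInf (norm '' {x : X | euclNorm b x = 1})

/-- `C = max{‖x‖ : |x| = 1}`. -/
def CConst (b : Module.Basis (Fin 2) ℝ X) : ℝ :=
  sSup (norm '' {x : X | euclNorm b x = 1})

/-- The right derivative of a function `f : ℝ → X`. -/
def rightDeriv (f : ℝ → X) (t : ℝ) : X := derivWithin f (Ici t) t

/-- The left derivative of a function `f : ℝ → X`. -/
def leftDeriv (f : ℝ → X) (t : ℝ) : X := derivWithin f (Iic t) t

/-- The arc-length function `s(t) = ∫₀^t ‖p'₊(u)‖ du`. -/
def arcLen (b : Module.Basis (Fin 2) ℝ X) (t : ℝ) : ℝ :=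
  ∫ u in (0:ℝ)..t, ‖rightDeriv (polarParam b) u‖

/-- The half-length `L = s(π)` of the unit sphere. -/
def halfLen (b : Module.Basis (Fin 2) ℝ X) : ℝ := arcLen b Real.pi

/-- The inverse `t = s⁻¹` of the arc-length function. -/
def arcInv (b : Module.Basis (Fin 2) ℝ X) : ℝ → ℝ := Function.invFun (arcLen b)

/-- The natural parameterization `r = p ∘ t` of the unit sphere. -/
def natParam (b : Module.Basis (Fin 2) ℝ X) : ℝ → X := polarParam b ∘ arcInv b

/-- Local absolute continuity of `f` with a.e. derivative `f'`, in the sense that `f` is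
differentiable almost everywhere, `f'` is locally integrable, and `f` is recovered from `f'`
by integration. -/
def LocAC {E : Type*} [NormedAddCommGroup E] [NormedSpace ℝ E] [CompleteSpace E]
    (f f' : ℝ → E) : Prop :=
  (∀ᵐ t : ℝ, HasDerivAt f (f' t) t) ∧ LocallyIntegrable f' volume ∧
    ∀ a b : ℝ, a ≤ b → f b - f a = ∫ t in a..b, f' t

/-- `s` is a Lebesgue point of `g`. -/
def LebesguePoint {E : Type*} [NormedAddCommGroup E] (g : ℝ → E) (s : ℝ) : Prop :=
  Tendsto (fun ε : ℝ => (1/ε) * ∫ t in (0:ℝ)..ε, ‖g (s + t) - g s‖) (𝓝[≠] (0:ℝ)) (𝓝 0)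

/-! The norm `g = ‖γ‖` along a differentiable curve `γ` differs near `t` by `o(s - t)` from the
convex function `s ↦ ‖γ t + (s - t) • γ' t‖`, so it has one-sided derivatives at every point,
and so does `γ / ‖γ‖` where `γ` does not vanish. If a real function has one-sided derivatives
`a ≠ b` at `t`, then for a rational `q` strictly between them `t` is a strict local extremum of
`s ↦ f s - q * s`; the strict local extrema of any function on `ℝ` form a countable set. Hence
`g`, and with it `γ / ‖γ‖`, is differentiable off a countable set. Apply this to `γ = e^{i·}`. -/

theorem countable_setOf_strictLocalMin {α β : Type*} [TopologicalSpace α]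
    [SecondCountableTopology α] [Preorder β] (φ : α → β) :
    {x | ∀ᶠ y in 𝓝[≠] x, φ x < φ y}.Countable := by
  have hU : ∀ x ∈ {x | ∀ᶠ y in 𝓝[≠] x, φ x < φ y}, ∃ U ∈ TopologicalSpace.countableBasis α,
      x ∈ U ∧ ∀ y ∈ U, y ≠ x → φ x < φ y := by
    intro x hx
    obtain ⟨u, hu, hxu, hmin⟩ := mem_nhdsWithin.1 hx
    obtain ⟨U, hUB, hxU, hUu⟩ :=
      (TopologicalSpace.isBasis_countableBasis α).exists_subset_of_mem_open hxu hu
    exact ⟨U, hUB, hxU, fun y hyU hyx => hmin ⟨hUu hyU, hyx⟩⟩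
  choose! U hUB hxU hmin using hU
  refine MapsTo.countable_of_injOn hUB (fun x hx y hy hxy => ?_)
    (TopologicalSpace.countable_countableBasis α)
  by_contra hne
  exact lt_asymm (hmin x hx y (hxy ▸ hxU y hy) (Ne.symm hne)) (hmin y hy x (hxy ▸ hxU x hx) hne)

theorem eventually_nhdsNE_sub_mul_lt_of_hasDerivWithinAt {f : ℝ → ℝ} {a b q t : ℝ}
    (hL : HasDerivWithinAt f a (Iio t) t) (hR : HasDerivWithinAt f b (Ioi t) t)
    (haq : a < q) (hqb : q < b) :
    ∀ᶠ y in 𝓝[≠] t, f t - q * t < f y - q * y := by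
  rw [hasDerivWithinAt_iff_tendsto_slope' self_notMem_Iio] at hL
  rw [hasDerivWithinAt_iff_tendsto_slope' self_notMem_Ioi] at hR
  rw [← nhdsLT_sup_nhdsGT, eventually_sup]
  constructor
  · filter_upwards [hL.eventually (eventually_lt_nhds haq), self_mem_nhdsWithin]
      with y hy (hyt : y < t)
    rw [slope_def_field, div_lt_iff_of_neg (sub_neg.2 hyt)] at hy
    linarith
  · filter_upwards [hR.eventually (eventually_gt_nhds hqb), self_mem_nhdsWithin]
      with y hy (hty : t < y)
    rw [slope_def_field, lt_div_iff₀ (sub_pos.2 hty)] at hy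
    linarith

theorem countable_setOf_leftDeriv_lt_rightDeriv (f : ℝ → ℝ) :
    {t | ∃ a b, a < b ∧ HasDerivWithinAt f a (Iio t) t ∧
      HasDerivWithinAt f b (Ioi t) t}.Countable := by
  refine (countable_iUnion fun q : ℚ => countable_setOf_strictLocalMin
    (fun y => f y - q * y)).mono ?_
  rintro t ⟨a, b, hab, hL, hR⟩
  obtain ⟨q, haq, hqb⟩ := exists_rat_btwn hab
  exact mem_iUnion.2 ⟨q, eventually_nhdsNE_sub_mul_lt_of_hasDerivWithinAt hL hR haq hqb⟩

section Curve

variable {E : Type*} [NormedAddCommGroup E] [NormedSpace ℝ E] {γ : ℝ → E} {t : ℝ}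

theorem hasDerivAt_of_hasDerivWithinAt_Iio_Ioi {f : ℝ → E} {a : E}
    (hL : HasDerivWithinAt f a (Iio t) t) (hR : HasDerivWithinAt f a (Ioi t) t) :
    HasDerivAt f a t := by
  rw [hasDerivWithinAt_Iio_iff_Iic] at hL
  rw [hasDerivWithinAt_Ioi_iff_Ici] at hR
  simpa only [Iic_union_Ici, hasDerivWithinAt_univ] using hL.union hR

theorem countable_setOf_not_differentiableAt {f : ℝ → ℝ}
    (hL : ∀ t, DifferentiableWithinAt ℝ f (Iio t) t)
    (hR : ∀ t, DifferentiableWithinAt ℝ f (Ioi t) t) :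
    {t | ¬DifferentiableAt ℝ f t}.Countable := by
  refine ((countable_setOf_leftDeriv_lt_rightDeriv f).union
    (countable_setOf_leftDeriv_lt_rightDeriv (-f))).mono fun t ht => ?_
  have hleft := (hL t).hasDerivWithinAt
  have hright := (hR t).hasDerivWithinAt
  rcases lt_trichotomy (derivWithin f (Iio t) t) (derivWithin f (Ioi t) t) with hlt | heq | hgt
  · exact Or.inl ⟨_, _, hlt, hleft, hright⟩
  · exact absurd (hasDerivAt_of_hasDerivWithinAt_Iio_Ioi (heq ▸ hleft) hright).differentiableAt ht
  · exact Or.inr ⟨_, _, neg_lt_neg hgt, hleft.neg, hright.neg⟩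

theorem convexOn_norm_add_sub_smul (w v : E) (t : ℝ) :
    ConvexOn ℝ univ (fun u : ℝ => ‖w + (u - t) • v‖) := by
  have hline : (fun u : ℝ => ‖w + (u - t) • v‖) =
      norm ∘ AffineMap.lineMap (w - t • v) (w - t • v + v) := by
    ext u
    simp only [Function.comp_apply, AffineMap.lineMap_apply_module']
    congr 1
    module
  rw [hline]
  exact convexOn_univ_norm.comp_affineMap _

theorem HasDerivAt.hasDerivWithinAt_norm {v : E} {s : Set ℝ} {d : ℝ} (hγ : HasDerivAt γ v t)
    (htangent : HasDerivWithinAt (fun u => ‖γ t + (u - t) • v‖) d s t) :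
    HasDerivWithinAt (fun u => ‖γ u‖) d s t := by
  have hrem : HasDerivWithinAt (fun u => ‖γ u‖ - ‖γ t + (u - t) • v‖) 0 s t := by
    refine (hasDerivAt_iff_isLittleO.2 ?_).hasDerivWithinAt
    refine (Asymptotics.IsBigO.of_bound 1 (Eventually.of_forall fun u => ?_)).trans_isLittleO
      (hasDerivAt_iff_isLittleO.1 hγ)
    simp only [sub_self, zero_smul, add_zero, smul_zero, sub_zero, one_mul, Real.norm_eq_abs]
    calc |‖γ u‖ - ‖γ t + (u - t) • v‖| ≤ ‖γ u - (γ t + (u - t) • v)‖ := abs_norm_sub_norm_le _ _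
      _ = ‖γ u - γ t - (u - t) • v‖ := by rw [sub_add_eq_sub_sub]
  simpa only [add_sub_cancel, add_zero] using htangent.fun_add hrem

theorem DifferentiableAt.differentiableWithinAt_norm_Iio (hγ : DifferentiableAt ℝ γ t) :
    DifferentiableWithinAt ℝ (fun u => ‖γ u‖) (Iio t) t :=
  (hγ.hasDerivAt.hasDerivWithinAt_norm ((convexOn_norm_add_sub_smul (γ t) (deriv γ t)
    t).hasDerivWithinAt_leftDeriv_of_mem_interior (by simp))).differentiableWithinAt

theorem DifferentiableAt.differentiableWithinAt_norm_Ioi (hγ : DifferentiableAt ℝ γ t) :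
    DifferentiableWithinAt ℝ (fun u => ‖γ u‖) (Ioi t) t :=
  (hγ.hasDerivAt.hasDerivWithinAt_norm ((convexOn_norm_add_sub_smul (γ t) (deriv γ t)
    t).hasDerivWithinAt_rightDeriv_of_mem_interior (by simp))).differentiableWithinAt

theorem DifferentiableAt.differentiableWithinAt_inv_norm_smul_Iio (hγ : DifferentiableAt ℝ γ t)
    (h0 : γ t ≠ 0) : DifferentiableWithinAt ℝ (fun u => ‖γ u‖⁻¹ • γ u) (Iio t) t :=
  (hγ.differentiableWithinAt_norm_Iio.inv (norm_ne_zero_iff.2 h0)).smul hγ.differentiableWithinAt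

theorem DifferentiableAt.differentiableWithinAt_inv_norm_smul_Ioi (hγ : DifferentiableAt ℝ γ t)
    (h0 : γ t ≠ 0) : DifferentiableWithinAt ℝ (fun u => ‖γ u‖⁻¹ • γ u) (Ioi t) t :=
  (hγ.differentiableWithinAt_norm_Ioi.inv (norm_ne_zero_iff.2 h0)).smul hγ.differentiableWithinAt

theorem Differentiable.countable_setOf_not_differentiableAt_inv_norm_smul
    (hγ : Differentiable ℝ γ) (h0 : ∀ t, γ t ≠ 0) :
    {t | ¬DifferentiableAt ℝ (fun u => ‖γ u‖⁻¹ • γ u) t}.Countable := by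
  refine (countable_setOf_not_differentiableAt (fun t => (hγ t).differentiableWithinAt_norm_Iio)
    (fun t => (hγ t).differentiableWithinAt_norm_Ioi)).mono ?_
  intro t ht hnorm
  exact ht <| (hnorm.inv (norm_ne_zero_iff.2 (h0 t))).smul (hγ t)

end Curve

theorem differentiable_expV (b : Module.Basis (Fin 2) ℝ X) : Differentiable ℝ (expV b) := by
  unfold expV
  fun_prop

theorem expV_ne_zero (b : Module.Basis (Fin 2) ℝ X) (t : ℝ) : expV b t ≠ 0 := by
  intro h
  have hcs := Fintype.linearIndependent_iff.1 b.linearIndependent ![Real.cos t, Real.sin t]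
    (by simpa [Fin.sum_univ_two, expV] using h)
  have hcos : Real.cos t = 0 := by simpa using hcs 0
  have hsin : Real.sin t = 0 := by simpa using hcs 1
  simpa [hcos, hsin] using Real.sin_sq_add_cos_sq t

theorem polarParam_oneSided_deriv_general (b : Module.Basis (Fin 2) ℝ X) :
    (∀ t : ℝ, (∃ l : X, HasDerivWithinAt (polarParam b) l (Iic t) t) ∧
      (∃ l : X, HasDerivWithinAt (polarParam b) l (Ici t) t)) ∧
    Set.Countable {t : ℝ | leftDeriv (polarParam b) t ≠ rightDeriv (polarParam b) t} := by
  have hγ := differentiable_expV b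
  have h0 := expV_ne_zero b
  refine ⟨fun t => ⟨?_, ?_⟩, ?_⟩
  · exact ⟨_, hasDerivWithinAt_Iio_iff_Iic.1
      ((hγ t).differentiableWithinAt_inv_norm_smul_Iio (h0 t)).hasDerivWithinAt⟩
  · exact ⟨_, hasDerivWithinAt_Ioi_iff_Ici.1
      ((hγ t).differentiableWithinAt_inv_norm_smul_Ioi (h0 t)).hasDerivWithinAt⟩
  · refine (hγ.countable_setOf_not_differentiableAt_inv_norm_smul h0).mono ?_
    intro t ht hp
    change DifferentiableAt ℝ (polarParam b) t at hp
    apply ht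
    rw [leftDeriv, rightDeriv, hp.derivWithin (uniqueDiffWithinAt_Iic t),
      hp.derivWithin (uniqueDiffWithinAt_Ici t)]

/-- The polar parameterization has one-sided derivatives at every point, and the set of points
where the two one-sided derivatives differ is at most countable. -/
theorem polarParam_oneSided_deriv [CompleteSpace X] (b : Module.Basis (Fin 2) ℝ X) :
    (∀ t : ℝ, (∃ l : X, HasDerivWithinAt (polarParam b) l (Iic t) t) ∧
      (∃ l : X, HasDerivWithinAt (polarParam b) l (Ici t) t)) ∧
    Set.Countable {t : ℝ | leftDeriv (polarParam b) t ≠ rightDeriv (polarParam b) t} :=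
  polarParam_oneSided_deriv_general b
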